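/- Define S^(k) = sqrt(Σ_{l=0}^{k} ‖s̃^(l)‖²) and R^(k) = sqrt(Σ_{l=0}^{k} (‖mean(α^(l)·z^(l))‖² + ‖mean(β^(l)·s^(l))‖² + ‖g̃^(l+1)‖²)). If λ_s := β_max·(1 + r_β) < 1, then for every k ≥ 0, S^(k) ≤ μ_sr·R^(k) + μ_sc, where μ_sr = (√2/(1−λ_s))·(2 + r_β) and μ_sc = ‖s̃^(0)‖·sqrt(2/(1−λ_s²)). -/

import Mathlib

open scoped BigOperators
open Filter

noncomputable section

/-- Row-space: each agent holds a vector in ℝⁿ (Euclidean). -/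
abbrev Vec (n : ℕ) := EuclideanSpace ℝ (Fin n)

/-- A "matrix" in ℝ^{N×n}, represented row-wise. -/
abbrev Mat (N n : ℕ) := Fin N → Vec n

/-- Row-mean operator `B ↦ J·B` with `J = (1/N)·11ᵀ`. -/
def meanM {N n : ℕ} (B : Mat N n) : Mat N n := fun _ => (N : ℝ)⁻¹ • ∑ i, B i

/-- Consensus violation `B̃ = B − B̄`. -/
def tilde {N n : ℕ} (B : Mat N n) : Mat N n := B - meanM B

/-- Frobenius norm of a row-wise matrix. -/
def fnorm {N n : ℕ} (B : Mat N n) : ℝ := Real.sqrt (∑ i, ‖B i‖ ^ 2)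

/-- Spectral norm (ℓ₂ operator norm) of a square matrix. -/
def specNorm {N : ℕ} (A : Matrix (Fin N) (Fin N) ℝ) : ℝ :=
  ‖LinearMap.toContinuousLinearMap (Matrix.toEuclideanLin A)‖

/-- Action of an N×N matrix on a row-wise N×n matrix. -/
def Wact {N n : ℕ} (W : Matrix (Fin N) (Fin N) ℝ) (B : Mat N n) : Mat N n :=
  fun i => ∑ j, W i j • B j

/-- Action of a diagonal matrix `diag a` on a row-wise matrix. -/
def dAct {N n : ℕ} (a : Fin N → ℝ) (B : Mat N n) : Mat N n := fun i => a i • B i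

/-- The matrix of row-wise gradients: i-th row is `∇f_i(x_i)ᵀ`. -/
def gRow {N n : ℕ} (f : Fin N → Vec n → ℝ) (x : Mat N n) : Mat N n :=
  fun i => gradient (f i) (x i)

/-- The all-(1/N) matrix `J = (1/N)·11ᵀ`. -/
def Jmat (N : ℕ) : Matrix (Fin N) (Fin N) ℝ := Matrix.of fun _ _ => (N : ℝ)⁻¹

/-- Double stochasticity of `W`. -/
def DoublyStochastic {N : ℕ} (W : Matrix (Fin N) (Fin N) ℝ) : Prop :=
  (∀ i, ∑ j, W i j = 1) ∧ (∀ j, ∑ i, W i j = 1)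

/-!
The consensus error of `s` obeys a perturbed contraction
`‖s̃⁽ˡ⁺¹⁾‖ ≤ λ_s ‖s̃⁽ˡ⁾‖ + ‖g̃⁽ˡ⁺¹⁾‖ + r_β ‖mean(β⁽ˡ⁾ s⁽ˡ⁾)‖`.
Split `β s = β s̃ + β s̄`: the first part is damped by `β_max`; the consensus error of the second is
at most `β_max ‖s̄‖`, and `β̄ s̄ = mean(β s) - mean(β s̃)` trades `‖s̄‖` for `‖mean(β s)‖` and
`β_max ‖s̃‖` at the price of the factor `r_β ≥ β_max / β̄`.
Squaring with the convexity bound `(λa + e)² ≤ λa² + e²/(1 - λ)` and summing the recursion once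
gives `(1 - λ_s) Σ ‖s̃⁽ˡ⁾‖² ≤ ‖s̃⁽⁰⁾‖² + Σ e_l² / (1 - λ_s)`, and `e_l² ≤ (2 + r_β)² R_l` termwise.
-/

open Finset

section Frobenius

variable {N n : ℕ}

lemma fnorm_eq_norm_toLp (B : Mat N n) : fnorm B = ‖WithLp.toLp 2 B‖ := by
  rw [fnorm, PiLp.norm_eq_of_L2]

lemma fnorm_nonneg (B : Mat N n) : 0 ≤ fnorm B := Real.sqrt_nonneg _

lemma fnorm_sq (B : Mat N n) : fnorm B ^ 2 = ∑ i, ‖B i‖ ^ 2 :=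
  Real.sq_sqrt (sum_nonneg fun _ _ => sq_nonneg _)

lemma fnorm_add_le (A B : Mat N n) : fnorm (A + B) ≤ fnorm A + fnorm B := by
  simpa only [fnorm_eq_norm_toLp, WithLp.toLp_add] using norm_add_le _ _

lemma fnorm_sub_le (A B : Mat N n) : fnorm (A - B) ≤ fnorm A + fnorm B := by
  simpa only [fnorm_eq_norm_toLp, WithLp.toLp_sub] using norm_sub_le _ _

lemma fnorm_neg (B : Mat N n) : fnorm (-B) = fnorm B := by
  simp only [fnorm_eq_norm_toLp, WithLp.toLp_neg, norm_neg]

lemma fnorm_smul (c : ℝ) (B : Mat N n) : fnorm (c • B) = |c| * fnorm B := by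
  simp only [fnorm_eq_norm_toLp, WithLp.toLp_smul, norm_smul, Real.norm_eq_abs]

lemma meanM_add (A B : Mat N n) : meanM (A + B) = meanM A + meanM B := by
  funext i
  simp [meanM, sum_add_distrib, smul_add]

lemma meanM_neg (B : Mat N n) : meanM (-B) = -meanM B := by
  funext i
  simp [meanM]

lemma tilde_add (A B : Mat N n) : tilde (A + B) = tilde A + tilde B := by
  simp only [tilde, meanM_add]; abel

lemma tilde_neg (B : Mat N n) : tilde (-B) = -tilde B := by
  simp only [tilde, meanM_neg]; abel

lemma tilde_add_meanM (B : Mat N n) : tilde B + meanM B = B := sub_add_cancel _ _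

lemma sum_tilde_eq_zero (B : Mat N n) : ∑ i, tilde B i = 0 := by
  rcases N.eq_zero_or_pos with rfl | hN
  · simp
  simp only [tilde, Pi.sub_apply, meanM, sum_sub_distrib, sum_const,
    card_univ, Fintype.card_fin, ← Nat.cast_smul_eq_nsmul ℝ, smul_smul,
    mul_inv_cancel₀ (Nat.cast_ne_zero.2 hN.ne' : (N : ℝ) ≠ 0), one_smul, sub_self]

lemma fnorm_sq_eq_tilde_add_meanM (B : Mat N n) :
    fnorm B ^ 2 = fnorm (tilde B) ^ 2 + fnorm (meanM B) ^ 2 := by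
  set v : Vec n := (N : ℝ)⁻¹ • ∑ i, B i
  have hrow : ∀ i, ‖B i‖ ^ 2 = ‖tilde B i‖ ^ 2 + 2 * inner ℝ (tilde B i) v + ‖v‖ ^ 2 := by
    intro i
    rw [← norm_add_sq_real]
    exact congrArg (‖·‖ ^ 2) (congrFun (tilde_add_meanM B) i).symm
  simp only [fnorm_sq, hrow, sum_add_distrib, ← mul_sum, ← sum_inner,
    sum_tilde_eq_zero, inner_zero_left, mul_zero, add_zero]
  rfl

lemma fnorm_tilde_le (B : Mat N n) : fnorm (tilde B) ≤ fnorm B := by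
  rw [← sq_le_sq₀ (fnorm_nonneg _) (fnorm_nonneg _), fnorm_sq_eq_tilde_add_meanM B]
  exact le_add_of_nonneg_right (sq_nonneg _)

lemma fnorm_meanM_le (B : Mat N n) : fnorm (meanM B) ≤ fnorm B := by
  rw [← sq_le_sq₀ (fnorm_nonneg _) (fnorm_nonneg _), fnorm_sq_eq_tilde_add_meanM B]
  exact le_add_of_nonneg_left (sq_nonneg _)

end Frobenius

section DiagonalScaling

variable {N n : ℕ}

lemma specNorm_nonneg (A : Matrix (Fin N) (Fin N) ℝ) : 0 ≤ specNorm A := norm_nonneg _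

lemma abs_le_specNorm_diagonal (d : Fin N → ℝ) (i : Fin N) :
    |d i| ≤ specNorm (Matrix.diagonal d) := by
  have h := (LinearMap.toContinuousLinearMap
    (Matrix.toEuclideanLin (Matrix.diagonal d))).le_opNorm (EuclideanSpace.single i (1 : ℝ))
  have himage : Matrix.toEuclideanLin (Matrix.diagonal d) (EuclideanSpace.single i (1 : ℝ))
      = EuclideanSpace.single i (d i) := by
    rw [Matrix.toLpLin_apply]
    exact congrArg (WithLp.toLp 2) ((Matrix.diagonal_mulVec_single d i 1).trans (by rw [mul_one]))
  rw [LinearMap.coe_toContinuousLinearMap', himage, PiLp.norm_single, PiLp.norm_single, norm_one,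
    mul_one, Real.norm_eq_abs] at h
  exact h

lemma fnorm_dAct_le (d : Fin N → ℝ) (B : Mat N n) :
    fnorm (dAct d B) ≤ specNorm (Matrix.diagonal d) * fnorm B := by
  rw [← sq_le_sq₀ (fnorm_nonneg _) (mul_nonneg (specNorm_nonneg _) (fnorm_nonneg _)), mul_pow,
    fnorm_sq, fnorm_sq, mul_sum]
  refine sum_le_sum fun i _ => ?_
  rw [dAct, norm_smul, Real.norm_eq_abs, mul_pow]
  gcongr
  exact abs_le_specNorm_diagonal d i

lemma dAct_add (d : Fin N → ℝ) (A B : Mat N n) : dAct d (A + B) = dAct d A + dAct d B := by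
  funext i
  simp [dAct, smul_add]

lemma meanM_dAct_meanM (d : Fin N → ℝ) (B : Mat N n) :
    meanM (dAct d (meanM B)) = ((N : ℝ)⁻¹ * ∑ i, d i) • meanM B := by
  funext i
  simp only [meanM, dAct, Pi.smul_apply, ← sum_smul, smul_smul, ← sum_mul, mul_assoc]

lemma avg_mul_fnorm_meanM_le (d : Fin N → ℝ) (B : Mat N n) :
    ((N : ℝ)⁻¹ * ∑ i, d i) * fnorm (meanM B)
      ≤ fnorm (meanM (dAct d B)) + specNorm (Matrix.diagonal d) * fnorm (tilde B) := by
  have hsplit : ((N : ℝ)⁻¹ * ∑ i, d i) • meanM B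
      = meanM (dAct d B) - meanM (dAct d (tilde B)) := by
    rw [← meanM_dAct_meanM, eq_sub_iff_add_eq, ← meanM_add, ← dAct_add, add_comm,
      tilde_add_meanM]
  calc ((N : ℝ)⁻¹ * ∑ i, d i) * fnorm (meanM B)
      ≤ |(N : ℝ)⁻¹ * ∑ i, d i| * fnorm (meanM B) := by gcongr; exacts [fnorm_nonneg _, le_abs_self _]
    _ = fnorm (meanM (dAct d B) - meanM (dAct d (tilde B))) := by rw [← fnorm_smul, hsplit]
    _ ≤ fnorm (meanM (dAct d B)) + fnorm (meanM (dAct d (tilde B))) := fnorm_sub_le _ _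
    _ ≤ _ := by gcongr; exact (fnorm_meanM_le _).trans (fnorm_dAct_le _ _)

lemma fnorm_tilde_dAct_le {d : Fin N → ℝ} {c r : ℝ} (hc : specNorm (Matrix.diagonal d) ≤ c)
    (hd : 0 < (N : ℝ)⁻¹ * ∑ i, d i) (hr : c / ((N : ℝ)⁻¹ * ∑ i, d i) ≤ r) (B : Mat N n) :
    fnorm (tilde (dAct d B)) ≤ c * (1 + r) * fnorm (tilde B) + r * fnorm (meanM (dAct d B)) := by
  have hc0 : 0 ≤ c := (specNorm_nonneg _).trans hc
  have hr0 : 0 ≤ r := (div_nonneg hc0 hd.le).trans hr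
  have hdAct : ∀ X : Mat N n, fnorm (dAct d X) ≤ c * fnorm X := fun X =>
    (fnorm_dAct_le d X).trans (mul_le_mul_of_nonneg_right hc (fnorm_nonneg X))
  have hmean : c * fnorm (meanM B) ≤ r * (fnorm (meanM (dAct d B)) + c * fnorm (tilde B)) :=
    calc c * fnorm (meanM B) ≤ r * ((N : ℝ)⁻¹ * ∑ i, d i) * fnorm (meanM B) := by
          gcongr; exacts [fnorm_nonneg _, (div_le_iff₀ hd).1 hr]
      _ ≤ r * (fnorm (meanM (dAct d B)) + c * fnorm (tilde B)) := by
          rw [mul_assoc]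
          gcongr
          exact (avg_mul_fnorm_meanM_le d B).trans (by gcongr; exact fnorm_nonneg _)
  calc fnorm (tilde (dAct d B))
      = fnorm (tilde (dAct d (tilde B)) + tilde (dAct d (meanM B))) := by
        rw [← tilde_add, ← dAct_add, tilde_add_meanM]
    _ ≤ fnorm (dAct d (tilde B)) + fnorm (dAct d (meanM B)) :=
        (fnorm_add_le _ _).trans (add_le_add (fnorm_tilde_le _) (fnorm_tilde_le _))
    _ ≤ c * fnorm (tilde B) + c * fnorm (meanM B) := add_le_add (hdAct _) (hdAct _)
    _ ≤ _ := by linear_combination hmean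

end DiagonalScaling

section LinearRecursion

variable {lam : ℝ}

lemma sq_le_mul_sq_add_sq_div {a b e : ℝ} (hlam0 : 0 ≤ lam) (hlam1 : lam < 1) (hb : 0 ≤ b)
    (h : b ≤ lam * a + e) : b ^ 2 ≤ lam * a ^ 2 + e ^ 2 / (1 - lam) := by
  have h1 : 0 < 1 - lam := sub_pos.2 hlam1
  have hconvex : lam * a ^ 2 + e ^ 2 / (1 - lam) - (lam * a + e) ^ 2
      = lam * ((1 - lam) * a - e) ^ 2 / (1 - lam) := by
    field_simp
    ring
  nlinarith [div_nonneg (mul_nonneg hlam0 (sq_nonneg ((1 - lam) * a - e))) h1.le]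

lemma sum_sq_le_of_le_mul_add (hlam0 : 0 ≤ lam) (hlam1 : lam < 1) {a e : ℕ → ℝ}
    (ha : ∀ l, 0 ≤ a l) (h : ∀ l, a (l + 1) ≤ lam * a l + e l) (k : ℕ) :
    (1 - lam) * ∑ l ∈ range (k + 1), a l ^ 2 ≤ a 0 ^ 2 + (∑ l ∈ range k, e l ^ 2) / (1 - lam) := by
  have hshift : ∑ l ∈ range k, a (l + 1) ^ 2
      ≤ lam * ∑ l ∈ range k, a l ^ 2 + (∑ l ∈ range k, e l ^ 2) / (1 - lam) := by
    rw [mul_sum, sum_div, ← sum_add_distrib]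
    exact sum_le_sum fun l _ => sq_le_mul_sq_add_sq_div hlam0 hlam1 (ha _) (h l)
  have hfirst := sum_range_succ' (fun l => a l ^ 2) k
  have hlast := sum_range_succ (fun l => a l ^ 2) k
  nlinarith [mul_nonneg hlam0 (sq_nonneg (a k))]

lemma sqrt_sum_sq_le_of_le_mul_add (hlam0 : 0 ≤ lam) (hlam1 : lam < 1) {a e : ℕ → ℝ}
    (ha : ∀ l, 0 ≤ a l) (h : ∀ l, a (l + 1) ≤ lam * a l + e l) (k : ℕ) :
    √(∑ l ∈ range (k + 1), a l ^ 2)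
      ≤ √2 / (1 - lam) * √(∑ l ∈ range (k + 1), e l ^ 2) + a 0 * √(2 / (1 - lam ^ 2)) := by
  set A := ∑ l ∈ range (k + 1), a l ^ 2
  set E := ∑ l ∈ range (k + 1), e l ^ 2
  have h1 : 0 < 1 - lam := sub_pos.2 hlam1
  have hE : 0 ≤ E := sum_nonneg fun _ _ => sq_nonneg _
  have hA : A ≤ a 0 ^ 2 / (1 - lam) + E / (1 - lam) ^ 2 := by
    have hEk : ∑ l ∈ range k, e l ^ 2 ≤ E :=
      sum_le_sum_of_subset_of_nonneg (range_subset_range.2 k.le_succ)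
        fun _ _ _ => sq_nonneg _
    calc A ≤ (a 0 ^ 2 + E / (1 - lam)) / (1 - lam) := by
          rw [le_div_iff₀ h1, mul_comm]
          linarith [sum_sq_le_of_le_mul_add hlam0 hlam1 ha h k,
            div_le_div_of_nonneg_right hEk h1.le]
      _ = a 0 ^ 2 / (1 - lam) + E / (1 - lam) ^ 2 := by rw [add_div, div_div, ← sq]
  have hinit : a 0 ^ 2 / (1 - lam) ≤ (a 0 * √(2 / (1 - lam ^ 2))) ^ 2 := by
    have h2 : 0 < 1 - lam ^ 2 := by nlinarith
    have hfrac : 1 / (1 - lam) ≤ 2 / (1 - lam ^ 2) := by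
      rw [div_le_div_iff₀ h1 h2]
      nlinarith
    rw [mul_pow, Real.sq_sqrt (div_pos two_pos h2).le, div_eq_mul_one_div]
    exact mul_le_mul_of_nonneg_left hfrac (sq_nonneg _)
  have hrest : E / (1 - lam) ^ 2 ≤ (√2 / (1 - lam) * √E) ^ 2 := by
    rw [mul_pow, div_pow, Real.sq_sqrt zero_le_two, Real.sq_sqrt hE, div_mul_eq_mul_div]
    gcongr
    linarith
  refine Real.sqrt_le_iff.2 ⟨by have := ha 0; positivity, ?_⟩
  nlinarith [mul_nonneg (mul_nonneg (div_nonneg (Real.sqrt_nonneg 2) h1.le) (Real.sqrt_nonneg E))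
    (mul_nonneg (ha 0) (Real.sqrt_nonneg (2 / (1 - lam ^ 2))))]

end LinearRecursion

lemma sq_add_mul_le_sq_mul {g m r z : ℝ} (hr : 0 ≤ r) (hz : 0 ≤ z) :
    (g + r * m) ^ 2 ≤ (2 + r) ^ 2 * (z + m ^ 2 + g ^ 2) := by
  nlinarith [sq_nonneg (r * g - m), sq_nonneg g, sq_nonneg m]

theorem stmt9_general (N n : ℕ)
    (f : Fin N → Vec n → ℝ)
    (α β : ℕ → Fin N → ℝ)
    (hβbar : ∀ k, 0 < (N : ℝ)⁻¹ * ∑ i, β k i)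
    (βmax rβ : ℝ)
    (hβmax : ∀ k, specNorm (Matrix.diagonal (β k)) ≤ βmax)
    (hrβ : ∀ k, βmax / ((N : ℝ)⁻¹ * ∑ i, β k i) ≤ rβ)
    (hlams : βmax * (1 + rβ) < 1)
    (x s z : ℕ → Mat N n)
    (hs : ∀ k, s (k + 1) = -(gRow f (x (k + 1))) + dAct (β k) (s k)) :
    ∀ k, Real.sqrt (∑ l ∈ Finset.range (k + 1), fnorm (tilde (s l)) ^ 2) ≤
      (Real.sqrt 2 / (1 - βmax * (1 + rβ))) * (2 + rβ) *
          Real.sqrt (∑ l ∈ Finset.range (k + 1),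
            (fnorm (meanM (dAct (α l) (z l))) ^ 2 + fnorm (meanM (dAct (β l) (s l))) ^ 2
              + fnorm (tilde (gRow f (x (l + 1)))) ^ 2))
        + fnorm (tilde (s 0)) * Real.sqrt (2 / (1 - (βmax * (1 + rβ)) ^ 2)) := by
  intro k
  have hβmax0 : 0 ≤ βmax := (specNorm_nonneg _).trans (hβmax 0)
  have hrβ0 : 0 ≤ rβ := (div_nonneg hβmax0 (hβbar 0).le).trans (hrβ 0)
  have hstep : ∀ l, fnorm (tilde (s (l + 1))) ≤ βmax * (1 + rβ) * fnorm (tilde (s l))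
      + (fnorm (tilde (gRow f (x (l + 1)))) + rβ * fnorm (meanM (dAct (β l) (s l)))) := by
    intro l
    calc fnorm (tilde (s (l + 1)))
        ≤ fnorm (tilde (gRow f (x (l + 1)))) + fnorm (tilde (dAct (β l) (s l))) := by
          rw [hs l, tilde_add, tilde_neg, ← fnorm_neg (tilde (gRow f _))]
          exact fnorm_add_le _ _
      _ ≤ _ := by linarith [fnorm_tilde_dAct_le (hβmax l) (hβbar l) (hrβ l) (s l)]
  refine (sqrt_sum_sq_le_of_le_mul_add (a := fun l => fnorm (tilde (s l))) (by positivity) hlams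
    (fun _ => fnorm_nonneg _) hstep k).trans ?_
  rw [mul_assoc _ (2 + rβ)]
  gcongr
  rw [← Real.sqrt_sq (by positivity : 0 ≤ 2 + rβ), ← Real.sqrt_mul (by positivity), mul_sum]
  exact Real.sqrt_le_sqrt (sum_le_sum fun l _ => sq_add_mul_le_sq_mul hrβ0 (sq_nonneg _))

/-- With `S^(k) = sqrt(Σ_{l≤k}‖s̃^(l)‖²)` and
`R^(k) = sqrt(Σ_{l≤k}(‖mean(α^(l)z^(l))‖² + ‖mean(β^(l)s^(l))‖² + ‖g̃^(l+1)‖²))`, if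
`λ_s = β_max(1+r_β) < 1` then `S^(k) ≤ μ_sr·R^(k) + μ_sc` with
`μ_sr = (√2/(1−λ_s))(2+r_β)` and `μ_sc = ‖s̃^(0)‖·sqrt(2/(1−λ_s²))`. -/
theorem stmt9 (N n : ℕ) (hN : 1 ≤ N) (hn : 1 ≤ n)
    (W : Matrix (Fin N) (Fin N) ℝ) (hW : DoublyStochastic W)
    (f : Fin N → Vec n → ℝ) (hf : ∀ i, Differentiable ℝ (f i))
    (α β : ℕ → Fin N → ℝ) (hα : ∀ k i, 0 ≤ α k i) (hβ : ∀ k i, 0 ≤ β k i)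
    (hβbar : ∀ k, 0 < (N : ℝ)⁻¹ * ∑ i, β k i)
    (βmax rβ : ℝ)
    (hβmax : ∀ k, specNorm (Matrix.diagonal (β k)) ≤ βmax)
    (hrβ : ∀ k, βmax / ((N : ℝ)⁻¹ * ∑ i, β k i) ≤ rβ)
    (hlams : βmax * (1 + rβ) < 1)
    (x s z : ℕ → Mat N n)
    (hx : ∀ k, x (k + 1) = Wact W (x k + dAct (α k) (z k)))
    (hs : ∀ k, s (k + 1) = -(gRow f (x (k + 1))) + dAct (β k) (s k))
    (hz : ∀ k, z (k + 1) = Wact W (z k + s (k + 1) - s k)) :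
    ∀ k, Real.sqrt (∑ l ∈ Finset.range (k + 1), fnorm (tilde (s l)) ^ 2) ≤
      (Real.sqrt 2 / (1 - βmax * (1 + rβ))) * (2 + rβ) *
          Real.sqrt (∑ l ∈ Finset.range (k + 1),
            (fnorm (meanM (dAct (α l) (z l))) ^ 2 + fnorm (meanM (dAct (β l) (s l))) ^ 2
              + fnorm (tilde (gRow f (x (l + 1)))) ^ 2))
        + fnorm (tilde (s 0)) * Real.sqrt (2 / (1 - (βmax * (1 + rβ)) ^ 2)) :=
  stmt9_general N n f α β hβbar βmax rβ hβmax hrβ hlams x s z hs
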